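/- Canonical minimal-rank representatives: for any closed term t over Σ₁ ∪ Σ₂ ∪ Σ₃ ∪ {x}, there exists a closed term t′ over the same signature such that (1) rank(t′) ≤ rank(t); (2) t ∼_{Mₙ,x} t′ (t and t′ are provably equal in 𝕋₁ + 𝕋₂ with constants y₁,…,yₙ, x); (3) (t′)^𝒜 = [t′]_≅ and u^𝒜 = [u]_≅ for every alien subterm u of t′ at arbitrary depth; and (4) t′ is not ≅-isomorphic to any term over Σ₁ ∪ Σ₂ ∪ Σ₃ ∪ {x} of strictly smaller rank. -/

import Mathlib

/-!
If one of the theories proves `x₀ = x₁`, every term is provably equal to `x`, which is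
canonical of rank `0`. Otherwise terms are normalised bottom-up. After normalising the
children of a `Σ_b`-rooted term, either its alien abstraction is not `𝕋_b`-provably a
variable, and then `interp` returns the term's own class; or it is provably equal to a
variable, hence, by nontriviality, to one of its own aliens, and the term collapses onto
that alien, which is provably equal to it, has smaller rank and is already canonical.
Normalisation never raises the rank. Now take a term of minimal rank among those provably
equal to `t` and normalise it: the result `t'` still has minimal rank. Since `≅` implies
provable equality, every term isomorphic to `t'` lies in the same class, so its rank is at
least that of `t'`.
-/

/-- First-order terms over symbols `S` with arity `ar` and variables `V`. -/
inductive Tm (S : Type) (ar : S → ℕ) (V : Type) : Type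
  | var : V → Tm S ar V
  | app : (f : S) → (Fin (ar f) → Tm S ar V) → Tm S ar V

namespace Tm
variable {S : Type} {ar : S → ℕ} {V W : Type}

def mapVar (g : V → W) : Tm S ar V → Tm S ar W
  | var v => var (g v)
  | app f ts => app f (fun i => (ts i).mapVar g)

def bind : Tm S ar V → (V → Tm S ar W) → Tm S ar W
  | var v, g => g v
  | app f ts, g => app f (fun i => (ts i).bind g)

/-- All variables of a term belong to a given set. -/
def VarsIn : Tm S ar V → Set V → Prop
  | var v, A => v ∈ A
  | app _ ts, A => ∀ i, VarsIn (ts i) A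

/-- The term contains at least one variable. -/
def HasVar : Tm S ar V → Prop
  | var _ => True
  | app _ ts => ∃ i, HasVar (ts i)

end Tm

/-- The combined signature: operation symbols of the two theories (`op`),
generator constants `y₁,…,yₙ` (`gen`), and indeterminate constants `x = ind 0`,
`xᵢ = ind i` (`ind`). -/
inductive CSym (F : Bool → Type) (n : ℕ) : Type
  | op : (b : Bool) → F b → CSym F n
  | gen : Fin n → CSym F n
  | ind : ℕ → CSym F n

namespace CSym
variable {F : Bool → Type} {n : ℕ}

def arity (arF : ∀ b, F b → ℕ) : CSym F n → ℕ
  | op b f => arF b f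
  | gen _ => 0
  | ind _ => 0

/-- Which of the four component signatures a symbol belongs to:
`0 = Σ₁`, `1 = Σ₂`, `2 = Σ₃`, `3 = Σ₄`. -/
def sig : CSym F n → Fin 4
  | op false _ => 0
  | op true _ => 1
  | gen _ => 2
  | ind _ => 3

end CSym
section Setup

variable (F : Bool → Type) (arF : ∀ b, F b → ℕ) (n : ℕ)

/-- Closed terms over the combined signature `Σ = Σ₁ ∪ Σ₂ ∪ Σ₃ ∪ Σ₄`. -/
abbrev CT := Tm (CSym F n) (CSym.arity arF) Empty

/-- The root symbol of a closed term. -/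
def rootSym : CT F arF n → CSym F n
  | .var v => v.elim
  | .app f _ => f

/-- All symbols of the closed term satisfy the predicate `P`. -/
def InSig (P : CSym F n → Prop) : CT F arF n → Prop
  | .var v => v.elim
  | .app f ts => P f ∧ ∀ i, InSig P (ts i)

/-- A closed term is pure if all of its symbols belong to a single one of the
four component signatures. -/
def IsPure (t : CT F arF n) : Prop := ∃ k : Fin 4, InSig F arF n (fun s => s.sig = k) t

/-- The rank of a closed term: `0` if pure, and otherwise `1` plus the maximal
rank of its alien subterms. -/
def rank : CT F arF n → ℕ
  | .var v => v.elim
  | .app f ts =>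
      Finset.univ.sup fun i =>
        rank (ts i) + (if (rootSym F arF n (ts i)).sig = f.sig then 0 else 1)

/-- The maximal subterms of `t` whose root is outside signature `k`. -/
def aliensUnder (k : Fin 4) : CT F arF n → Set (CT F arF n)
  | .var v => v.elim
  | .app f ts =>
      if f.sig = k then ⋃ i, aliensUnder k (ts i) else {Tm.app f ts}

/-- The alien subterms of a closed term (relative to the signature of its root). -/
def aliensSet : CT F arF n → Set (CT F arF n)
  | .var v => v.elim
  | .app f ts => ⋃ i, aliensUnder F arF n f.sig (ts i)

/-- All alien subterms at arbitrary depth. -/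
def allAliensSet : CT F arF n → Set (CT F arF n)
  | .var v => v.elim
  | .app f ts =>
      ⋃ i, (if (rootSym F arF n (ts i)).sig = f.sig then (∅ : Set _) else {ts i}) ∪
        allAliensSet (ts i)

/-- View a closed combined term through the layer of theory `b`: keep the
top part built from `Σ_b`-symbols and regard the maximal non-`Σ_b`-rooted
subterms as opaque constants. -/
def layerize (b : Bool) : CT F arF n → Tm (F b) (arF b) (CT F arF n)
  | .app (.op b' f) ts =>
      if h : b' = b then h ▸ (Tm.app f (fun i => layerize b' (ts i)))
      else Tm.var (Tm.app (.op b' f) ts)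
  | t => Tm.var t

end Setup
section Setup2

variable (F : Bool → Type) (arF : ∀ b, F b → ℕ) (n : ℕ)
variable (Ax : ∀ b, Set (Tm (F b) (arF b) ℕ × Tm (F b) (arF b) ℕ))

mutual
/-- The isomorphism relation `≅` on closed combined terms, defined together
with the layer congruences: two terms are isomorphic iff their roots lie in the
same component signature and their alien abstractions are congruent modulo the
corresponding theory (for the constant signatures `Σ₃, Σ₄` this is syntactic
equality). -/
inductive Iso : CT F arF n → CT F arF n → Prop where
  | opEq (b : Bool) (u v : CT F arF n) :
      (∃ g : F b, rootSym F arF n u = .op b g) →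
      (∃ g : F b, rootSym F arF n v = .op b g) →
      LEq b (layerize F arF n b u) (layerize F arF n b v) → Iso u v
  | constEq (t : CT F arF n) :
      ((rootSym F arF n t).sig = 2 ∨ (rootSym F arF n t).sig = 3) → Iso t t

/-- The congruence `≈_b` on `Σ_b`-terms whose constants are closed combined
terms (representing their `≅`-classes): generated by the substitution instances
of the axioms of `𝕋_b` together with the identification of `≅`-related
constants. -/
inductive LEq : (b : Bool) →
    Tm (F b) (arF b) (CT F arF n) → Tm (F b) (arF b) (CT F arF n) → Prop where
  | refl (b) (t) : LEq b t t
  | symm {b s t} : LEq b s t → LEq b t s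
  | trans {b s t u} : LEq b s t → LEq b t u → LEq b s u
  | congr (b) (g : F b) (ts us : Fin (arF b g) → Tm (F b) (arF b) (CT F arF n)) :
      (∀ i, LEq b (ts i) (us i)) → LEq b (.app g ts) (.app g us)
  | varRel (b) (s t : CT F arF n) : Iso s t → LEq b (.var s) (.var t)
  | ax (b) (u v : Tm (F b) (arF b) ℕ) : (u, v) ∈ Ax b →
      ∀ σ : ℕ → Tm (F b) (arF b) (CT F arF n), LEq b (u.bind σ) (v.bind σ)
end

end Setup2
section Setup3

variable (F : Bool → Type) (arF : ∀ b, F b → ℕ) (n : ℕ)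
variable (Ax : ∀ b, Set (Tm (F b) (arF b) ℕ × Tm (F b) (arF b) ℕ))

/-- The combined algebra `𝒜 = Term^c(Σ)/≅`. -/
abbrev Alg := Quot (Iso F arF n Ax)

/-- Provable equality in the theory `𝕋_b` on terms with variables (equivalently
the smallest `Σ_b`-congruence containing all substitution instances of the
axioms of `𝕋_b`); with `V := Alg` this is the congruence `≈_b` on
`Term^c(Σ_b, Term^c(Σ)/≅)`. -/
inductive AxCong (b : Bool) {V : Type} : Tm (F b) (arF b) V → Tm (F b) (arF b) V → Prop where
  | refl (t) : AxCong b t t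
  | symm {s t} : AxCong b s t → AxCong b t s
  | trans {s t u} : AxCong b s t → AxCong b t u → AxCong b s u
  | congr (g : F b) (ts us : Fin (arF b g) → Tm (F b) (arF b) V) :
      (∀ i, AxCong b (ts i) (us i)) → AxCong b (.app g ts) (.app g us)
  | ax (u v : Tm (F b) (arF b) ℕ) : (u, v) ∈ Ax b →
      ∀ σ : ℕ → Tm (F b) (arF b) V, AxCong b (u.bind σ) (v.bind σ)

/-- Abstraction of alien subterms: `[t]ᵇ_≅ ∈ Term^c(Σ_b, Term^c(Σ)/≅)`. -/
def absQ (b : Bool) (t : CT F arF n) : Tm (F b) (arF b) (Alg F arF n Ax) :=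
  (layerize F arF n b t).mapVar (Quot.mk _)

attribute [local instance] Classical.propDecidable

/-- The interpretation `t^𝒜` of a closed combined term in the combined algebra:
a term collapses to (the class of) an alien subterm whose class its alien
abstraction is `≈_b`-congruent to, and is interpreted by its own class
otherwise. -/
noncomputable def interp : CT F arF n → Alg F arF n Ax
  | .app (.op b g) ts =>
      let t' : CT F arF n := .app (.op b g) (fun i => (interp (ts i)).out)
      if h : ∃ u, u ∈ aliensSet F arF n t' ∧
          AxCong F arF Ax b (absQ F arF n Ax b t') (.var (Quot.mk _ u))
      then Quot.mk _ h.choose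
      else Quot.mk _ t'
  | t => Quot.mk _ t

end Setup3
section Setup4

variable (F : Bool → Type) (arF : ∀ b, F b → ℕ) (n : ℕ)
variable (Ax : ∀ b, Set (Tm (F b) (arF b) ℕ × Tm (F b) (arF b) ℕ))

/-- Substitution of a closed term `w` for the indeterminate constant `x_j` in a
closed combined term. -/
def substInd (j : ℕ) (w : CT F arF n) : CT F arF n → CT F arF n
  | .var v => v.elim
  | .app (.ind j') ts => if j' = j then w else .app (.ind j') ts
  | .app f ts => .app f (fun i => substInd j w (ts i))

/-- The indeterminate constant `x_i` as a closed term (`x = xTm 0`). -/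
def xTm (i : ℕ) : CT F arF n := .app (.ind i) Fin.elim0

/-- Replace every indeterminate constant occurring in a term by `x`. -/
def indToX : CT F arF n → CT F arF n
  | .var v => v.elim
  | .app (.ind _) _ => xTm F arF n 0
  | .app f ts => .app f (fun i => indToX (ts i))

/-- Embedding of `Σ_b`-terms into combined terms. -/
def embedOp (b : Bool) {V : Type} : Tm (F b) (arF b) V → Tm (CSym F n) (CSym.arity arF) V
  | .var v => .var v
  | .app g ts => .app (.op b g) (fun i => embedOp b (ts i))

/-- Provable equality for the (combination of the) theories `𝕋_b` (`b ∈ B`) on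
closed terms over the sub-signature of symbols satisfying `P`: the smallest
congruence on that set of closed terms containing all substitution instances
(by closed terms over the sub-signature) of the axioms. -/
inductive PE (B : Set Bool) (P : CSym F n → Prop) : CT F arF n → CT F arF n → Prop where
  | refl (t) : InSig F arF n P t → PE B P t t
  | symm {s t} : PE B P s t → PE B P t s
  | trans {s t u} : PE B P s t → PE B P t u → PE B P s u
  | congr (f : CSym F n) (ts us : Fin (CSym.arity arF f) → CT F arF n) : P f →
      (∀ i, PE B P (ts i) (us i)) → PE B P (.app f ts) (.app f us)
  | ax (b : Bool) (hb : b ∈ B) (u v : Tm (F b) (arF b) ℕ) (h : (u, v) ∈ Ax b)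
      (σ : ℕ → CT F arF n) : (∀ m, InSig F arF n P (σ m)) →
      PE B P ((embedOp F arF n b u).bind σ) ((embedOp F arF n b v).bind σ)

/-- The sub-signature consisting of the operations of the theories in `B`, all
generator constants `y₁,…,yₙ`, and the indeterminates `x_j` with `j ∈ J`. -/
def SigP (B : Set Bool) (J : Set ℕ) : CSym F n → Prop
  | .op b _ => b ∈ B
  | .gen _ => True
  | .ind j => j ∈ J

/-- The (combination of the) theories in `B` is non-trivial: it does not prove
the equation `x = y` for distinct variables (equivalently, it does not identify
two distinct indeterminate constants). -/
def Nontriv (B : Set Bool) : Prop :=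
  ¬ PE F arF n Ax B (SigP F n B Set.univ) (xTm F arF n 1) (xTm F arF n 2)

/-- Membership of (the class of) `t` in the logical isotropy group of the free
model on `n` generators of the combination of the theories in `B`: `t` is a
closed term over the signature extended by the constant `x` that is invertible
under substitution into `x` and commutes generically with every operation. -/
def GIso (B : Set Bool) (t : CT F arF n) : Prop :=
  InSig F arF n (SigP F n B {0}) t ∧
  (∃ tinv, InSig F arF n (SigP F n B {0}) tinv ∧
    PE F arF n Ax B (SigP F n B {0}) (substInd F arF n 0 tinv t) (xTm F arF n 0) ∧
    PE F arF n Ax B (SigP F n B {0}) (substInd F arF n 0 t tinv) (xTm F arF n 0)) ∧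
  ∀ b, b ∈ B → ∀ g : F b,
    PE F arF n Ax B (SigP F n B {j | 1 ≤ j ∧ j ≤ arF b g})
      (substInd F arF n 0 (.app (.op b g) (fun i => xTm F arF n (i.val + 1))) t)
      (.app (.op b g) (fun i => substInd F arF n 0 (xTm F arF n (i.val + 1)) t))

/-- `g` is a projection in `𝕋_b`. -/
def IsProj (b : Bool) (g : F b) : Prop :=
  ∃ i : Fin (arF b g),
    AxCong F arF Ax b (V := ℕ) (.app g (fun j => .var j.val)) (.var i.val)

/-- `g` is constant in `𝕋_b`: `𝕋_b` proves `g(y₁,…,y_m) = s` for pairwise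
distinct variables none of which occurs in `s`. -/
def IsConst (b : Bool) (g : F b) : Prop :=
  ∃ s : Tm (F b) (arF b) ℕ, s.VarsIn {m | arF b g ≤ m} ∧
    AxCong F arF Ax b (V := ℕ) (.app g (fun j => .var j.val)) s

end Setup4
section Models

variable (F : Bool → Type) (arF : ∀ b, F b → ℕ) (n : ℕ)
variable (Ax : ∀ b, Set (Tm (F b) (arF b) ℕ × Tm (F b) (arF b) ℕ))

/-- Evaluation of a `Σ_b`-term in a set equipped with operations. -/
def evalTm {α : Type} (ops : ∀ b (g : F b), (Fin (arF b g) → α) → α)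
    (b : Bool) {V : Type} (ρ : V → α) : Tm (F b) (arF b) V → α
  | .var v => ρ v
  | .app g ts => ops b g (fun i => evalTm ops b ρ (ts i))

/-- A (set-based) model of the combined theory `𝕋₁ + 𝕋₂`. -/
structure TModel where
  carrier : Type
  ops : ∀ b (g : F b), (Fin (arF b g) → carrier) → carrier
  sat : ∀ b u v, (u, v) ∈ Ax b → ∀ ρ : ℕ → carrier,
      evalTm F arF ops b ρ u = evalTm F arF ops b ρ v

/-- Homomorphisms of models. -/
@[ext]
structure TModelHom (M N : TModel F arF Ax) where
  toFun : M.carrier → N.carrier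
  map_ops : ∀ b (g : F b) (args : Fin (arF b g) → M.carrier),
      toFun (M.ops b g args) = N.ops b g (fun i => toFun (args i))

/-- The identity homomorphism. -/
def TModelHom.id (M : TModel F arF Ax) : TModelHom F arF Ax M M :=
  ⟨fun a => a, fun _ _ _ => rfl⟩

/-- Composition of homomorphisms. -/
def TModelHom.comp {M M' M'' : TModel F arF Ax} (h' : TModelHom F arF Ax M' M'')
    (h : TModelHom F arF Ax M M') : TModelHom F arF Ax M M'' :=
  ⟨fun a => h'.toFun (h.toFun a), fun b g args => by
    simp [h.map_ops, h'.map_ops]⟩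

/-- `M` together with the `n` elements `gens` is a free model on `n`
generators: the universal property. -/
def IsFreeOn (M : TModel F arF Ax) (gens : Fin n → M.carrier) : Prop :=
  ∀ (N : TModel F arF Ax) (a : Fin n → N.carrier),
    ∃! h : TModelHom F arF Ax M N, ∀ i, h.toFun (gens i) = a i

end Models

namespace Tm
variable {S : Type} {ar : S → ℕ} {V W X : Type}

theorem bind_assoc : ∀ (t : Tm S ar V) (σ : V → Tm S ar W) (τ : W → Tm S ar X),
    (t.bind σ).bind τ = t.bind fun v => (σ v).bind τ
  | var _, _, _ => rfl
  | app f ts, σ, τ => congrArg (app f) (funext fun i => bind_assoc (ts i) σ τ)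

theorem mapVar_bind : ∀ (t : Tm S ar V) (g : V → W) (σ : W → Tm S ar X),
    (t.mapVar g).bind σ = t.bind fun v => σ (g v)
  | var _, _, _ => rfl
  | app f ts, g, σ => congrArg (app f) (funext fun i => mapVar_bind (ts i) g σ)

theorem bind_mapVar : ∀ (t : Tm S ar V) (σ : V → Tm S ar W) (g : W → X),
    (t.bind σ).mapVar g = t.bind fun v => (σ v).mapVar g
  | var _, _, _ => rfl
  | app f ts, σ, g => congrArg (app f) (funext fun i => bind_mapVar (ts i) σ g)

theorem bind_var : ∀ t : Tm S ar V, t.bind var = t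
  | var _ => rfl
  | app f ts => congrArg (app f) (funext fun i => bind_var (ts i))

theorem VarsIn.mono : ∀ {t : Tm S ar V} {A B : Set V}, t.VarsIn A → A ⊆ B → t.VarsIn B
  | var _, _, _, h, hAB => hAB h
  | app _ _, _, _, h, hAB => fun i => (h i).mono hAB

theorem VarsIn.mapVar {g : V → W} :
    ∀ {t : Tm S ar V} {A : Set V}, t.VarsIn A → (t.mapVar g).VarsIn (g '' A)
  | var v, _, h => ⟨v, h, rfl⟩
  | app _ _, _, h => fun i => (h i).mapVar

theorem VarsIn.bind_congr : ∀ {t : Tm S ar V} {A : Set V} {σ τ : V → Tm S ar W},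
    t.VarsIn A → (∀ v ∈ A, σ v = τ v) → t.bind σ = t.bind τ
  | var v, _, _, _, h, hστ => hστ v h
  | app f _, _, _, _, h, hστ => congrArg (app f) (funext fun i => (h i).bind_congr hστ)

end Tm

section Combination
variable {F : Bool → Type} {arF : ∀ b, F b → ℕ} {n : ℕ}

/-- The rank that `t` contributes to a parent whose symbol lies in signature `k`. -/
def rankUnder (k : Fin 4) (t : CT F arF n) : ℕ :=
  rank F arF n t + if (rootSym F arF n t).sig = k then 0 else 1

theorem rank_app (f : CSym F n) (ts : Fin (CSym.arity arF f) → CT F arF n) :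
    rank F arF n (.app f ts) = Finset.univ.sup fun i => rankUnder f.sig (ts i) := by
  rw [rank]; rfl

theorem rankUnder_le_rank_app (f : CSym F n) (ts : Fin (CSym.arity arF f) → CT F arF n) (i) :
    rankUnder f.sig (ts i) ≤ rank F arF n (.app f ts) :=
  rank_app f ts ▸ Finset.le_sup (f := fun i => rankUnder f.sig (ts i)) (Finset.mem_univ i)

theorem rankUnder_rootSym (t : CT F arF n) :
    rankUnder (rootSym F arF n t).sig t = rank F arF n t := by
  simp [rankUnder]

theorem rank_le_rankUnder (k : Fin 4) (t : CT F arF n) : rank F arF n t ≤ rankUnder k t :=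
  Nat.le_add_right _ _

theorem rankUnder_le_succ (k : Fin 4) (t : CT F arF n) : rankUnder k t ≤ rank F arF n t + 1 := by
  unfold rankUnder; split <;> omega

theorem rank_xTm (i : ℕ) : rank F arF n (xTm F arF n i) = 0 :=
  (rank_app (.ind i) _).trans Finset.sup_empty

theorem rootSym_sig_ne_of_mem_aliensUnder {k : Fin 4} {u : CT F arF n} :
    ∀ {s : CT F arF n}, u ∈ aliensUnder F arF n k s → (rootSym F arF n u).sig ≠ k
  | .var v, _ => v.elim
  | .app f ts, h => by
      rw [aliensUnder] at h
      split_ifs at h with hf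
      · obtain ⟨i, hi⟩ := Set.mem_iUnion.mp h
        exact rootSym_sig_ne_of_mem_aliensUnder hi
      · rw [Set.mem_singleton_iff.mp h]; exact hf

theorem rank_succ_le_of_mem_aliensUnder {k : Fin 4} {u : CT F arF n} :
    ∀ {s : CT F arF n}, u ∈ aliensUnder F arF n k s → rank F arF n u + 1 ≤ rankUnder k s
  | .var v, _ => v.elim
  | .app f ts, h => by
      rw [aliensUnder] at h
      split_ifs at h with hf
      · obtain ⟨i, hi⟩ := Set.mem_iUnion.mp h
        calc rank F arF n u + 1 ≤ rankUnder k (ts i) := rank_succ_le_of_mem_aliensUnder hi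
          _ ≤ rank F arF n (.app f ts) := hf ▸ rankUnder_le_rank_app f ts i
          _ ≤ rankUnder k (.app f ts) := rank_le_rankUnder k _
      · rw [Set.mem_singleton_iff.mp h, rankUnder, rootSym, if_neg hf]

theorem rank_lt_of_mem_aliensSet {u : CT F arF n} {f : CSym F n} {ts}
    (h : u ∈ aliensSet F arF n (.app f ts)) : rank F arF n u < rank F arF n (.app f ts) := by
  rw [aliensSet] at h
  obtain ⟨i, hi⟩ := Set.mem_iUnion.mp h
  exact (rank_succ_le_of_mem_aliensUnder hi).trans (rankUnder_le_rank_app f ts i)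

theorem InSig.of_mem_aliensUnder {P : CSym F n → Prop} {k : Fin 4} {u : CT F arF n} :
    ∀ {s : CT F arF n}, InSig F arF n P s → u ∈ aliensUnder F arF n k s → InSig F arF n P u
  | .var v, _, _ => v.elim
  | .app f ts, hs, h => by
      rw [aliensUnder] at h
      split_ifs at h
      · obtain ⟨i, hi⟩ := Set.mem_iUnion.mp h
        exact (hs.2 i).of_mem_aliensUnder hi
      · rwa [Set.mem_singleton_iff.mp h]

theorem eq_or_mem_allAliensSet_of_mem_aliensUnder {k : Fin 4} {u : CT F arF n} :
    ∀ {s : CT F arF n}, u ∈ aliensUnder F arF n k s → u = s ∨ u ∈ allAliensSet F arF n s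
  | .var v, _ => v.elim
  | .app f ts, h => by
      rw [aliensUnder] at h
      split_ifs at h with hf
      · obtain ⟨i, hi⟩ := Set.mem_iUnion.mp h
        right
        rw [allAliensSet]
        refine Set.mem_iUnion.mpr ⟨i, ?_⟩
        rcases eq_or_mem_allAliensSet_of_mem_aliensUnder hi with rfl | hmem
        · left
          rw [if_neg (hf ▸ rootSym_sig_ne_of_mem_aliensUnder hi)]
          rfl
        · exact Or.inr hmem
      · exact Or.inl h

theorem allAliensSet_subset {u : CT F arF n} :
    ∀ {s : CT F arF n}, u ∈ allAliensSet F arF n s →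
      allAliensSet F arF n u ⊆ allAliensSet F arF n s
  | .var v, _ => v.elim
  | .app f ts, h => by
      rw [allAliensSet] at h ⊢
      obtain ⟨i, hi⟩ := Set.mem_iUnion.mp h
      refine fun v hv => Set.mem_iUnion.mpr ⟨i, Or.inr ?_⟩
      rcases hi with hi | hi
      · split_ifs at hi
        · exact absurd hi (Set.notMem_empty u)
        · rwa [← Set.mem_singleton_iff.mp hi]
      · exact allAliensSet_subset hi hv

theorem allAliensSet_xTm (i : ℕ) : allAliensSet F arF n (xTm F arF n i) = ∅ := by
  ext u
  simp only [xTm, allAliensSet, Set.mem_iUnion, Set.notMem_empty, iff_false]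
  rintro ⟨j, -⟩
  exact j.elim0

def sigOf (b : Bool) : Fin 4 := bif b then 1 else 0

theorem sig_op (b : Bool) (g : F b) : (CSym.op (n := n) b g).sig = sigOf b := by
  cases b <;> rfl

theorem sig_op_eq_sigOf_iff {b' : Bool} (b : Bool) (g : F b') :
    (CSym.op (n := n) b' g).sig = sigOf b ↔ b' = b := by
  cases b <;> cases b' <;> simp [CSym.sig, sigOf]

theorem sig_gen_ne_sigOf (i : Fin n) (b : Bool) : (CSym.gen (F := F) i).sig ≠ sigOf b := by
  cases b <;> simp [CSym.sig, sigOf]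

theorem sig_ind_ne_sigOf (j : ℕ) (b : Bool) : (CSym.ind (F := F) (n := n) j).sig ≠ sigOf b := by
  cases b <;> simp [CSym.sig, sigOf]

theorem aliensUnder_sigOf_op (b : Bool) (g : F b) (ts) :
    aliensUnder F arF n (sigOf b) (.app (.op b g) ts) = aliensSet F arF n (.app (.op b g) ts) := by
  rw [aliensUnder, if_pos (sig_op b g), aliensSet, sig_op b g]

theorem layerize_op_self (b : Bool) (g : F b) (ts) :
    layerize F arF n b (.app (.op b g) ts) = .app g fun i => layerize F arF n b (ts i) := by
  rw [layerize, dif_pos rfl]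

theorem layerize_op_of_ne {b' b : Bool} (h : b' ≠ b) (g : F b') (ts) :
    layerize F arF n b (.app (.op b' g) ts) = .var (.app (.op b' g) ts) := by
  rw [layerize, dif_neg h]

theorem layerize_gen (b : Bool) (i : Fin n) (ts) :
    layerize F arF n b (.app (.gen i) ts) = .var (.app (.gen i) ts) := by
  rw [layerize]
  rintro _ _ _ ⟨⟩

theorem layerize_ind (b : Bool) (j : ℕ) (ts) :
    layerize F arF n b (.app (.ind j) ts) = .var (.app (.ind j) ts) := by
  rw [layerize]
  rintro _ _ _ ⟨⟩

theorem varsIn_layerize (b : Bool) :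
    ∀ t : CT F arF n, (layerize F arF n b t).VarsIn (aliensUnder F arF n (sigOf b) t)
  | .var v => v.elim
  | .app (.op b' g) ts => by
      by_cases hb : b' = b
      · subst hb
        rw [layerize_op_self, aliensUnder, if_pos (sig_op b' g)]
        exact fun i => (varsIn_layerize b' (ts i)).mono (Set.subset_iUnion_of_subset i le_rfl)
      · rw [layerize_op_of_ne hb, aliensUnder, if_neg (mt (sig_op_eq_sigOf_iff b g).mp hb)]
        rfl
  | .app (.gen i) ts => by
      rw [layerize_gen, aliensUnder, if_neg (sig_gen_ne_sigOf i b)]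
      rfl
  | .app (.ind j) ts => by
      rw [layerize_ind, aliensUnder, if_neg (sig_ind_ne_sigOf j b)]
      rfl

theorem indToX_op (b : Bool) (g : F b) (ts) :
    indToX F arF n (.app (.op b g) ts) = .app (.op b g) fun i => indToX F arF n (ts i) := by
  rw [indToX]
  rintro _ _ ⟨⟩

theorem indToX_gen (i : Fin n) (ts) :
    indToX F arF n (.app (.gen i) ts) = .app (.gen i) fun i => indToX F arF n (ts i) := by
  rw [indToX]
  rintro _ _ ⟨⟩

theorem indToX_ind (j : ℕ) (ts) : indToX F arF n (.app (.ind j) ts) = xTm F arF n 0 := by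
  rw [indToX]

theorem embedOp_bind {V W : Type} {b : Bool} :
    ∀ (t : Tm (F b) (arF b) V) (σ : V → Tm (F b) (arF b) W),
      embedOp F arF n b (t.bind σ) = (embedOp F arF n b t).bind fun v => embedOp F arF n b (σ v)
  | .var _, _ => rfl
  | .app _ ts, σ => congrArg (Tm.app _) (funext fun i => embedOp_bind (ts i) σ)

theorem embedOp_mapVar {V W : Type} {b : Bool} :
    ∀ (t : Tm (F b) (arF b) V) (g : V → W),
      embedOp F arF n b (t.mapVar g) = (embedOp F arF n b t).mapVar g
  | .var _, _ => rfl
  | .app _ ts, g => congrArg (Tm.app _) (funext fun i => embedOp_mapVar (ts i) g)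

theorem embedOp_layerize_bind_indToX (b : Bool) :
    ∀ t : CT F arF n,
      (embedOp F arF n b (layerize F arF n b t)).bind (indToX F arF n) = indToX F arF n t
  | .var v => v.elim
  | .app (.op b' _) ts => by
      by_cases hb : b' = b
      · subst hb
        rw [layerize_op_self, indToX_op]
        exact congrArg (Tm.app _) (funext fun i => embedOp_layerize_bind_indToX b' (ts i))
      · rw [layerize_op_of_ne hb]; rfl
  | .app (.gen i) ts => by rw [layerize_gen]; rfl
  | .app (.ind j) ts => by rw [layerize_ind]; rfl

-- the signature `Σ₁ ∪ Σ₂ ∪ Σ₃ ∪ {x}`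
local notation "Σₓ" => SigP F n Set.univ {0}

theorem inSig_xTm : InSig F arF n Σₓ (xTm F arF n 0) :=
  ⟨rfl, fun i => i.elim0⟩

theorem inSig_indToX : ∀ t : CT F arF n, InSig F arF n Σₓ (indToX F arF n t)
  | .var v => v.elim
  | .app (.op b g) ts => by
      rw [indToX_op]; exact ⟨trivial, fun i => inSig_indToX (ts i)⟩
  | .app (.gen i) ts => by
      rw [indToX_gen]; exact ⟨trivial, fun i => inSig_indToX (ts i)⟩
  | .app (.ind j) ts => by
      rw [indToX_ind]; exact inSig_xTm

theorem InSig.indToX_eq : ∀ {t : CT F arF n}, InSig F arF n Σₓ t → indToX F arF n t = t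
  | .var v, _ => v.elim
  | .app (.op b g) ts, h => by
      rw [indToX_op]
      exact congrArg (Tm.app _) (funext fun i => (h.2 i).indToX_eq)
  | .app (.gen i) ts, h => by
      rw [indToX_gen]
      exact congrArg (Tm.app _) (funext fun i => (h.2 i).indToX_eq)
  | .app (.ind j) ts, h => by
      obtain rfl : j = 0 := h.1
      rw [indToX_ind, xTm]
      exact congrArg (Tm.app _) (funext fun i => i.elim0)

theorem inSig_embedOp_bind {V : Type} {b : Bool} :
    ∀ (q : Tm (F b) (arF b) V) {σ : V → CT F arF n},
      (∀ v, InSig F arF n Σₓ (σ v)) → InSig F arF n Σₓ ((embedOp F arF n b q).bind σ)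
  | .var v, _, h => h v
  | .app _ qs, _, h => ⟨trivial, fun i => inSig_embedOp_bind (qs i) h⟩

variable {Ax : ∀ b, Set (Tm (F b) (arF b) ℕ × Tm (F b) (arF b) ℕ)}

local infix:50 " ≡ₓ " => PE F arF n Ax Set.univ (SigP F n Set.univ {0})

theorem AxCong.bind {b : Bool} {V W : Type} {u v : Tm (F b) (arF b) V}
    (h : AxCong F arF Ax b u v) (σ : V → Tm (F b) (arF b) W) :
    AxCong F arF Ax b (u.bind σ) (v.bind σ) := by
  induction h with
  | refl t => exact .refl _
  | symm _ ih => exact ih.symm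
  | trans _ _ ih₁ ih₂ => exact ih₁.trans ih₂
  | congr g _ _ _ ih => exact .congr g _ _ ih
  | ax u v hax τ => simp only [Tm.bind_assoc]; exact .ax u v hax _

theorem AxCong.pe_embedOp_bind {b : Bool} {V : Type} {u v : Tm (F b) (arF b) V}
    (h : AxCong F arF Ax b u v) {σ : V → CT F arF n} (hσ : ∀ x, InSig F arF n Σₓ (σ x)) :
    (embedOp F arF n b u).bind σ ≡ₓ (embedOp F arF n b v).bind σ := by
  induction h with
  | refl t => exact .refl _ (inSig_embedOp_bind t hσ)
  | symm _ ih => exact ih.symm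
  | trans _ _ ih₁ ih₂ => exact ih₁.trans ih₂
  | congr g _ _ _ ih => exact .congr (.op b g) _ _ (Set.mem_univ b) ih
  | ax u v hax τ =>
      simp only [embedOp_bind, Tm.bind_assoc]
      exact .ax b (Set.mem_univ b) u v hax _ fun m => inSig_embedOp_bind (τ m) hσ

theorem PE.embedOp_bind_congr {b : Bool} :
    ∀ (q : Tm (F b) (arF b) (CT F arF n)) {σ τ : CT F arF n → CT F arF n},
      (∀ u, σ u ≡ₓ τ u) →
        (embedOp F arF n b q).bind σ ≡ₓ (embedOp F arF n b q).bind τ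
  | .var u, _, _, h => h u
  | .app g qs, _, _, h =>
      .congr (.op b g) _ _ (Set.mem_univ b) fun i => PE.embedOp_bind_congr (qs i) h

theorem pe_xTm_of_axCong_var_var {b : Bool} (h : AxCong F arF Ax b (V := ℕ) (.var 0) (.var 1))
    {s : CT F arF n} (hs : InSig F arF n Σₓ s) : s ≡ₓ xTm F arF n 0 :=
  h.pe_embedOp_bind (σ := fun | 0 => s | _ => xTm F arF n 0) fun | 0 => hs | _ + 1 => inSig_xTm

theorem LEq.axCong_mapVar {b : Bool} {p q : Tm (F b) (arF b) (CT F arF n)}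
    (h : LEq F arF n Ax b p q) :
    AxCong F arF Ax b (p.mapVar (Quot.mk (Iso F arF n Ax))) (q.mapVar (Quot.mk _)) := by
  refine LEq.rec (motive_1 := fun _ _ _ => True)
    (motive_2 := fun b p q _ =>
      AxCong F arF Ax b (p.mapVar (Quot.mk (Iso F arF n Ax))) (q.mapVar (Quot.mk _)))
    ?_ ?_ ?_ ?_ ?_ ?_ ?_ ?_ h
  · intros; trivial
  · intros; trivial
  · intros; exact .refl _
  · intro _ _ _ _ ih; exact ih.symm
  · intro _ _ _ _ _ _ ih₁ ih₂; exact ih₁.trans ih₂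
  · intro _ g _ _ _ ih; exact .congr g _ _ ih
  · intro b s t hst _
    show AxCong F arF Ax b (.var (Quot.mk _ s)) (.var (Quot.mk _ t))
    rw [Quot.sound hst]
    exact .refl _
  · intro b u v hax σ
    simp only [Tm.bind_mapVar]
    exact .ax u v hax _

theorem Iso.lEq_layerize {s u : CT F arF n} (h : Iso F arF n Ax s u) (b : Bool) :
    LEq F arF n Ax b (layerize F arF n b s) (layerize F arF n b u) := by
  cases h with
  | constEq t _ => exact .refl b _
  | opEq b' s u hs hu hL =>
      by_cases hb : b' = b
      · subst hb; exact hL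
      obtain ⟨g, hs⟩ := hs
      obtain ⟨g', hu⟩ := hu
      have hIso : Iso F arF n Ax s u := .opEq b' s u ⟨g, hs⟩ ⟨g', hu⟩ hL
      match s, u, hs, hu with
      | .app _ _, .app _ _, rfl, rfl =>
          rw [layerize_op_of_ne hb, layerize_op_of_ne hb]
          exact .varRel b _ _ hIso

theorem lEq_layerize_of_quot_eq {s u : CT F arF n}
    (h : Quot.mk (Iso F arF n Ax) s = Quot.mk _ u) (b : Bool) :
    LEq F arF n Ax b (layerize F arF n b s) (layerize F arF n b u) := by
  have h' := Quot.eq.mp h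
  clear h
  induction h' with
  | rel _ _ hr => exact hr.lEq_layerize b
  | refl _ => exact .refl b _
  | symm _ _ _ ih => exact ih.symm
  | trans _ _ _ _ _ ih₁ ih₂ => exact ih₁.trans ih₂

theorem axCong_absQ_of_quot_eq {s u : CT F arF n}
    (h : Quot.mk (Iso F arF n Ax) s = Quot.mk _ u) (b : Bool) :
    AxCong F arF Ax b (absQ F arF n Ax b s) (absQ F arF n Ax b u) :=
  (lEq_layerize_of_quot_eq h b).axCong_mapVar

theorem Iso.pe_indToX {s u : CT F arF n} (h : Iso F arF n Ax s u) :
    indToX F arF n s ≡ₓ indToX F arF n u := by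
  refine Iso.rec (motive_1 := fun s u _ => indToX F arF n s ≡ₓ indToX F arF n u)
    (motive_2 := fun b p q _ => (embedOp F arF n b p).bind (indToX F arF n) ≡ₓ
      (embedOp F arF n b q).bind (indToX F arF n))
    ?_ (fun t _ => .refl _ (inSig_indToX t))
    (fun _ t => .refl _ (inSig_embedOp_bind t inSig_indToX))
    (fun _ ih => ih.symm) (fun _ _ ih₁ ih₂ => ih₁.trans ih₂)
    (fun b g _ _ _ ih => .congr (.op b g) _ _ (Set.mem_univ b) ih) (fun _ _ _ _ ih => ih) ?_ h
  · intro b u v _ _ _ ih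
    rwa [embedOp_layerize_bind_indToX, embedOp_layerize_bind_indToX] at ih
  · intro b u v hax σ
    simp only [embedOp_bind, Tm.bind_assoc]
    exact .ax b (Set.mem_univ b) u v hax _ fun m => inSig_embedOp_bind (σ m) inSig_indToX

theorem pe_indToX_of_quot_eq {s u : CT F arF n} (h : Quot.mk (Iso F arF n Ax) s = Quot.mk _ u) :
    indToX F arF n s ≡ₓ indToX F arF n u := by
  have h' := Quot.eq.mp h
  clear h
  induction h' with
  | rel _ _ hr => exact hr.pe_indToX
  | refl t => exact .refl _ (inSig_indToX t)
  | symm _ _ _ ih => exact ih.symm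
  | trans _ _ _ _ _ ih₁ ih₂ => exact ih₁.trans ih₂

theorem Iso.pe {s u : CT F arF n} (h : Iso F arF n Ax s u)
    (hs : InSig F arF n Σₓ s) (hu : InSig F arF n Σₓ u) : s ≡ₓ u := by
  simpa only [hs.indToX_eq, hu.indToX_eq] using h.pe_indToX

theorem quot_mk_op_congr {b : Bool} (g : F b)
    {ts us : Fin (CSym.arity arF (.op b g)) → CT F arF n}
    (h : ∀ i, Quot.mk (Iso F arF n Ax) (ts i) = Quot.mk _ (us i)) :
    Quot.mk (Iso F arF n Ax) (.app (.op b g) ts) = Quot.mk _ (.app (.op b g) us) := by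
  refine Quot.sound (.opEq b _ _ ⟨g, rfl⟩ ⟨g, rfl⟩ ?_)
  rw [layerize_op_self, layerize_op_self]
  exact .congr b g _ _ fun i => lEq_layerize_of_quot_eq (h i) b

/-- In a nontrivial theory, a term provably equal to a variable is provably equal to one of
its own variables: otherwise renaming that variable, or (if there are none) the two instances
`x₀`, `x₁` of the equation, would prove `x₀ = x₁`. -/
theorem AxCong.exists_mem_of_varsIn {b : Bool} {V : Type}
    (hnt : ¬ AxCong F arF Ax b (V := ℕ) (.var 0) (.var 1))
    {p : Tm (F b) (arF b) V} {A : Set V} {q : V} (hp : p.VarsIn A)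
    (h : AxCong F arF Ax b p (.var q)) : ∃ a ∈ A, AxCong F arF Ax b p (.var a) := by
  classical
  by_cases hq : q ∈ A
  · exact ⟨q, hq, h⟩
  rcases A.eq_empty_or_nonempty with rfl | ⟨a, ha⟩
  · have hconst := hp.bind_congr (σ := fun _ => .var 0) (τ := fun _ => .var 1)
      fun v hv => absurd hv (Set.notMem_empty v)
    exact absurd ((h.bind fun _ => .var 0).symm.trans (hconst ▸ h.bind fun _ => .var 1)) hnt
  · refine ⟨a, ha, ?_⟩
    have hrename := h.bind fun v => if v = q then .var a else .var v
    rwa [hp.bind_congr (τ := Tm.var) fun v hv => if_neg (ne_of_mem_of_not_mem hv hq),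
      Tm.bind_var, Tm.bind, if_pos rfl] at hrename

theorem exists_mem_aliensSet_axCong_absQ {b : Bool} (g : F b)
    {ts : Fin (CSym.arity arF (.op b g)) → CT F arF n}
    (hnt : ¬ AxCong F arF Ax b (V := ℕ) (.var 0) (.var 1)) {q : Alg F arF n Ax}
    (h : AxCong F arF Ax b (absQ F arF n Ax b (.app (.op b g) ts)) (.var q)) :
    ∃ u ∈ aliensSet F arF n (.app (.op b g) ts),
      AxCong F arF Ax b (absQ F arF n Ax b (.app (.op b g) ts)) (.var (Quot.mk _ u)) := by
  have hvars := (varsIn_layerize b (.app (.op b g) ts)).mapVar (g := Quot.mk (Iso F arF n Ax))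
  rw [aliensUnder_sigOf_op] at hvars
  obtain ⟨_, ⟨u, hu, rfl⟩, hu'⟩ := h.exists_mem_of_varsIn hnt hvars
  exact ⟨u, hu, hu'⟩

theorem AxCong.pe_of_absQ_eq_var {b : Bool} {t u : CT F arF n}
    (h : AxCong F arF Ax b (absQ F arF n Ax b t) (.var (Quot.mk _ u)))
    (ht : InSig F arF n Σₓ t) (hu : InSig F arF n Σₓ u) : t ≡ₓ u := by
  have hreal := h.pe_embedOp_bind (σ := fun p => indToX F arF n p.out) fun _ => inSig_indToX _
  rw [absQ, embedOp_mapVar, Tm.mapVar_bind] at hreal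
  have hleft := PE.embedOp_bind_congr (Ax := Ax) (layerize F arF n b t)
    fun v => pe_indToX_of_quot_eq (Quot.out_eq (Quot.mk (Iso F arF n Ax) v)).symm
  have hright := pe_indToX_of_quot_eq (Quot.out_eq (Quot.mk (Iso F arF n Ax) u))
  rw [embedOp_layerize_bind_indToX, ht.indToX_eq] at hleft
  rw [hu.indToX_eq] at hright
  exact (hleft.trans hreal).trans hright

variable (Ax) in
def IsCanonical (t : CT F arF n) : Prop :=
  interp F arF n Ax t = Quot.mk _ t ∧
    ∀ u ∈ allAliensSet F arF n t, interp F arF n Ax u = Quot.mk _ u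

theorem IsCanonical.app {f : CSym F n} {ts : Fin (CSym.arity arF f) → CT F arF n}
    (hts : ∀ i, IsCanonical Ax (ts i))
    (h : interp F arF n Ax (.app f ts) = Quot.mk _ (.app f ts)) :
    IsCanonical Ax (.app f ts) := by
  refine ⟨h, fun u hu => ?_⟩
  rw [allAliensSet] at hu
  obtain ⟨i, hi | hi⟩ := Set.mem_iUnion.mp hu
  · split_ifs at hi
    · exact absurd hi (Set.notMem_empty u)
    · exact Set.mem_singleton_iff.mp hi ▸ (hts i).1
  · exact (hts i).2 u hi

theorem IsCanonical.of_mem_aliensSet {f : CSym F n} {ts : Fin (CSym.arity arF f) → CT F arF n}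
    (hts : ∀ i, IsCanonical Ax (ts i)) {u : CT F arF n}
    (hu : u ∈ aliensSet F arF n (.app f ts)) :
    IsCanonical Ax u := by
  rw [aliensSet] at hu
  obtain ⟨i, hi⟩ := Set.mem_iUnion.mp hu
  rcases eq_or_mem_allAliensSet_of_mem_aliensUnder hi with rfl | hmem
  · exact hts i
  · exact ⟨(hts i).2 u hmem, fun v hv => (hts i).2 v (allAliensSet_subset hmem hv)⟩

theorem isCanonical_gen (i : Fin n) (ts) : IsCanonical Ax (.app (.gen i) ts : CT F arF n) :=
  .app (fun i => i.elim0) (by rw [interp]; rintro _ _ _ ⟨⟩)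

theorem isCanonical_ind (j : ℕ) (ts) : IsCanonical Ax (.app (.ind j) ts : CT F arF n) :=
  .app (fun i => i.elim0) (by rw [interp]; rintro _ _ _ ⟨⟩)

/-- If no collapse is possible at the root, `interp` rebuilds the term from representatives
of its children's classes, which are those of the children themselves. -/
theorem interp_op_of_not_collapse {b : Bool} (g : F b)
    {ts : Fin (CSym.arity arF (.op b g)) → CT F arF n}
    (hts : ∀ i, interp F arF n Ax (ts i) = Quot.mk _ (ts i))
    (hnc : ¬ ∃ q, AxCong F arF Ax b (absQ F arF n Ax b (.app (.op b g) ts)) (.var q)) :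
    interp F arF n Ax (.app (.op b g) ts) = Quot.mk _ (.app (.op b g) ts) := by
  have hout := quot_mk_op_congr (Ax := Ax) g (ts := fun i => (interp F arF n Ax (ts i)).out)
    (us := ts) fun i => by rw [Quot.out_eq, hts]
  rw [interp, dif_neg]
  · exact hout
  · rintro ⟨u, -, hu⟩
    exact hnc ⟨_, (axCong_absQ_of_quot_eq hout.symm b).trans hu⟩

theorem exists_canonical_pe_rankUnder_le
    (hnt : ∀ b, ¬ AxCong F arF Ax b (V := ℕ) (.var 0) (.var 1)) :
    ∀ t : CT F arF n, InSig F arF n Σₓ t →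
      ∃ s, InSig F arF n Σₓ s ∧ (∀ k, rankUnder k s ≤ rankUnder k t) ∧ t ≡ₓ s ∧
        IsCanonical Ax s
  | .var v, _ => v.elim
  | .app (.gen i) ts, ht => ⟨_, ht, fun _ => le_rfl, .refl _ ht, isCanonical_gen i ts⟩
  | .app (.ind j) ts, ht => ⟨_, ht, fun _ => le_rfl, .refl _ ht, isCanonical_ind j ts⟩
  | .app (.op b g) ts, ht => by
      choose s hsSig hsRank hsPE hsCan using
        fun i => exists_canonical_pe_rankUnder_le hnt (ts i) (ht.2 i)
      have hT : InSig F arF n Σₓ (.app (.op b g) s) := ⟨trivial, hsSig⟩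
      have htT : .app (.op b g) ts ≡ₓ .app (.op b g) s := .congr _ _ _ (Set.mem_univ b) hsPE
      have hrank : rank F arF n (.app (.op b g) s) ≤ rank F arF n (.app (.op b g) ts) := by
        rw [rank_app, rank_app]
        exact Finset.sup_mono_fun fun i _ => hsRank i _
      by_cases hcollapse : ∃ q, AxCong F arF Ax b (absQ F arF n Ax b (.app (.op b g) s)) (.var q)
      · obtain ⟨q, hq⟩ := hcollapse
        obtain ⟨u, hu, hsu⟩ := exists_mem_aliensSet_axCong_absQ g (hnt b) hq
        have hu' : InSig F arF n Σₓ u := by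
          rw [aliensSet] at hu
          obtain ⟨i, hi⟩ := Set.mem_iUnion.mp hu
          exact (hsSig i).of_mem_aliensUnder hi
        refine ⟨u, hu', fun k => ?_, htT.trans (hsu.pe_of_absQ_eq_var hT hu'),
          .of_mem_aliensSet hsCan hu⟩
        calc rankUnder k u ≤ rank F arF n u + 1 := rankUnder_le_succ k u
          _ ≤ rank F arF n (.app (.op b g) s) := rank_lt_of_mem_aliensSet hu
          _ ≤ rank F arF n (.app (.op b g) ts) := hrank
          _ ≤ rankUnder k (.app (.op b g) ts) := rank_le_rankUnder k _
      · refine ⟨_, hT, fun k => Nat.add_le_add hrank le_rfl, htT,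
          .app hsCan (interp_op_of_not_collapse g (fun i => (hsCan i).1) hcollapse)⟩

theorem exists_canonical_pe_rank_le (t : CT F arF n) (ht : InSig F arF n Σₓ t) :
    ∃ s, InSig F arF n Σₓ s ∧ rank F arF n s ≤ rank F arF n t ∧ t ≡ₓ s ∧
      IsCanonical Ax s := by
  by_cases htriv : ∃ b, AxCong F arF Ax b (V := ℕ) (.var 0) (.var 1)
  · obtain ⟨b, hb⟩ := htriv
    refine ⟨_, inSig_xTm, (rank_xTm 0).trans_le (Nat.zero_le _), pe_xTm_of_axCong_var_var hb ht,
      isCanonical_ind 0 _⟩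
  · obtain ⟨s, hs, hrank, hts, hcan⟩ :=
      exists_canonical_pe_rankUnder_le (not_exists.mp htriv) t ht
    exact ⟨s, hs, (rank_le_rankUnder _ s).trans (rankUnder_rootSym t ▸ hrank _), hts, hcan⟩

end Combination

section Statement
variable (F : Bool → Type) (arF : ∀ b, F b → ℕ) (n : ℕ)
variable (Ax : ∀ b, Set (Tm (F b) (arF b) ℕ × Tm (F b) (arF b) ℕ))

/-- Canonical minimal-rank representatives: every closed term `t` over
`Σ₁ ∪ Σ₂ ∪ Σ₃ ∪ {x}` is provably equal to a term `t'` of no greater rank whose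
interpretation (and that of all its alien subterms) is its own class, and which
is not isomorphic to any term over this signature of strictly smaller rank. -/
theorem canonical_representative (t : CT F arF n)
    (ht : InSig F arF n (SigP F n Set.univ {0}) t) :
    ∃ t' : CT F arF n, InSig F arF n (SigP F n Set.univ {0}) t' ∧
      rank F arF n t' ≤ rank F arF n t ∧
      PE F arF n Ax Set.univ (SigP F n Set.univ {0}) t t' ∧
      interp F arF n Ax t' = Quot.mk (Iso F arF n Ax) t' ∧
      (∀ u ∈ allAliensSet F arF n t',
        interp F arF n Ax u = Quot.mk (Iso F arF n Ax) u) ∧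
      ∀ w : CT F arF n, InSig F arF n (SigP F n Set.univ {0}) w →
        Iso F arF n Ax t' w → rank F arF n t' ≤ rank F arF n w := by
  obtain ⟨w, ⟨hw, htw⟩, hwmin⟩ := WellFounded.has_min (measure (rank F arF n)).wf
    {w | InSig F arF n (SigP F n Set.univ {0}) w ∧
      PE F arF n Ax Set.univ (SigP F n Set.univ {0}) t w} ⟨t, ht, .refl _ ht⟩
  obtain ⟨s, hs, hsw, hws, hcan⟩ := exists_canonical_pe_rank_le (Ax := Ax) w hw
  have hmin : ∀ v, InSig F arF n (SigP F n Set.univ {0}) v →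
      PE F arF n Ax Set.univ (SigP F n Set.univ {0}) t v → rank F arF n s ≤ rank F arF n v :=
    fun v hv htv => hsw.trans (not_lt.mp (hwmin v ⟨hv, htv⟩))
  have hts := htw.trans hws
  exact ⟨s, hs, hmin t ht (.refl _ ht), hts, hcan.1, hcan.2,
    fun v hv hsv => hmin v hv (hts.trans (hsv.pe hs hv))⟩
end Statement
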